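/- Let $Q, K$ be positive integers, let $\mathbf{P}$ be a symmetric positive semidefinite $Q \times Q$ real matrix, let $R \geq 0$ be a real number, and let $\alpha_\psi > 0$, $\beta_\psi > 0$. Let $\mu$ be any finite Borel measure on the space of $Q \times K$ real matrices. Then the function $(\boldsymbol{\Psi}, \mathbf{H}) \mapsto \left(\prod_{k=1}^K h_k^{R/2} \exp(-h_k \psi_k^\top \mathbf{P} \psi_k / 2)\, G(h_k \mid \alpha_\psi, \beta_\psi)\right) \mathbb{I}(\boldsymbol{\Psi}^\top \boldsymbol{\Psi} = \mathbf{I}_K)$, where $\psi_k$ denotes the $k$-th column of $\boldsymbol{\Psi}$ and $\mathbf{H} = (h_1, \ldots, h_K) \in (0,\infty)^K$, is integrable with respect to the product of $\mu$ and $K$-dimensional Lebesgue measure restricted to $(0,\infty)^K$. In other words, the joint prior $p(\boldsymbol{\Psi}, \mathbf{H})$ of the fully-Bayesian FPCA model is proper for all hyperparameter values $\alpha_\psi > 0$ and $\beta_\psi > 0$. -/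

import Mathlib

open MeasureTheory Matrix Real

/-- Measurable space structure on matrices, inherited from the Pi type. -/
instance matrixMeasurableSpace (Q K : ℕ) :
    MeasurableSpace (Matrix (Fin Q) (Fin K) ℝ) := MeasurableSpace.pi

/-- The Gamma density with shape `a` and rate `b`. -/
noncomputable def gammaDens (a b x : ℝ) : ℝ :=
  b ^ a / Real.Gamma a * x ^ (a - 1) * Real.exp (-(b * x))

/-- The joint prior `p(Ψ, H)` of the fully-Bayesian FPCA model is proper for all
hyperparameter values `αψ > 0`, `βψ > 0`: the (unnormalized) prior density is integrable
with respect to the product of any finite Borel measure `μ` on `Q × K` matrices and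
`K`-dimensional Lebesgue measure restricted to `(0, ∞)^K`. -/
theorem fpca_prior_proper (Q K : ℕ) (hQ : 0 < Q) (hK : 0 < K)
    (P : Matrix (Fin Q) (Fin Q) ℝ) (hP : P.PosSemidef)
    (R : ℝ) (hR : 0 ≤ R) (αψ βψ : ℝ) (hα : 0 < αψ) (hβ : 0 < βψ)
    (μ : Measure (Matrix (Fin Q) (Fin K) ℝ)) [IsFiniteMeasure μ] :
    Integrable
      (fun p : Matrix (Fin Q) (Fin K) ℝ × (Fin K → ℝ) =>
        (∏ k : Fin K,
            (p.2 k) ^ (R / 2) *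
              Real.exp (-(p.2 k) * ((fun q => p.1 q k) ⬝ᵥ P.mulVec (fun q => p.1 q k)) / 2) *
              gammaDens αψ βψ (p.2 k)) *
          Set.indicator {Ψ : Matrix (Fin Q) (Fin K) ℝ | Ψᵀ * Ψ = 1} 1 p.1)
      (μ.prod (volume.restrict {H : Fin K → ℝ | ∀ k, 0 < H k})) := by
  classical
  set S : Set (Fin K → ℝ) := {H : Fin K → ℝ | ∀ k, 0 < H k} with hSdef
  set ν := volume.restrict S with hν
  -- the one-dimensional dominating function
  set g : ℝ → ℝ := Set.indicator (Set.Ioi (0:ℝ))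
      (fun h => h ^ (R / 2) * gammaDens αψ βψ h) with hg
  -- integrability of g
  have hgOn : IntegrableOn (fun h : ℝ => h ^ (R / 2) * gammaDens αψ βψ h)
      (Set.Ioi (0:ℝ)) volume := by
    have h1 : IntegrableOn
        (fun x : ℝ => x ^ (R / 2 + αψ - 1) * Real.exp (-βψ * x ^ (1:ℝ)))
        (Set.Ioi (0:ℝ)) volume :=
      integrableOn_rpow_mul_exp_neg_mul_rpow (by linarith) one_pos hβ
    have h2 : IntegrableOn
        (fun x : ℝ => βψ ^ αψ / Real.Gamma αψ *
          (x ^ (R / 2 + αψ - 1) * Real.exp (-βψ * x ^ (1:ℝ)))) (Set.Ioi (0:ℝ)) volume :=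
      h1.const_mul (βψ ^ αψ / Real.Gamma αψ)
    refine h2.congr_fun (fun x hx => ?_) measurableSet_Ioi
    have hx0 : (0:ℝ) < x := hx
    simp only [gammaDens]
    rw [Real.rpow_one, show R / 2 + αψ - 1 = R / 2 + (αψ - 1) by ring, Real.rpow_add hx0]
    ring
  have hgInt : Integrable g volume := by
    rw [hg, integrable_indicator_iff measurableSet_Ioi]
    exact hgOn
  -- integrability of the product over k
  have hGInt : Integrable (fun H : Fin K → ℝ => ∏ k : Fin K, g (H k)) volume :=
    Integrable.fintype_prod (f := fun _ : Fin K => g) (fun _ => hgInt)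
  have hGν : Integrable (fun H : Fin K → ℝ => ∏ k : Fin K, g (H k)) ν :=
    hGInt.restrict
  have hbound : Integrable
      (fun p : Matrix (Fin Q) (Fin K) ℝ × (Fin K → ℝ) => ∏ k : Fin K, g (p.2 k))
      (μ.prod ν) := by
    have := (integrable_const (μ := μ) (1:ℝ)).mul_prod hGν
    simpa using this
  -- measurability of the set S
  have hSmeas : MeasurableSet S := by
    have : S = ⋂ k : Fin K, (fun H : Fin K → ℝ => H k) ⁻¹' Set.Ioi 0 := by
      ext H; simp [hSdef]
    rw [this]
    exact MeasurableSet.iInter fun k => (measurable_pi_apply k) measurableSet_Ioi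
  -- measurability of the Stiefel set
  have hStief : MeasurableSet {Ψ : Matrix (Fin Q) (Fin K) ℝ | Ψᵀ * Ψ = 1} := by
    have hEq : {Ψ : Matrix (Fin Q) (Fin K) ℝ | Ψᵀ * Ψ = 1} =
        ⋂ i : Fin K, ⋂ j : Fin K,
          {Ψ : Matrix (Fin Q) (Fin K) ℝ |
            (∑ q : Fin Q, Ψ q i * Ψ q j) = (1 : Matrix (Fin K) (Fin K) ℝ) i j} := by
      ext Ψ
      simp only [Set.mem_setOf_eq, Set.mem_iInter, ← Matrix.ext_iff, Matrix.mul_apply,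
        Matrix.transpose_apply]
    rw [hEq]
    refine MeasurableSet.iInter fun i => MeasurableSet.iInter fun j => ?_
    have hm : Measurable fun Ψ : Matrix (Fin Q) (Fin K) ℝ => ∑ q : Fin Q, Ψ q i * Ψ q j := by
      refine Finset.measurable_sum _ fun q _ => ?_
      fun_prop
    exact measurableSet_eq_fun hm measurable_const
  -- measurability of the full integrand
  have hmeas : AEStronglyMeasurable
      (fun p : Matrix (Fin Q) (Fin K) ℝ × (Fin K → ℝ) =>
        (∏ k : Fin K,
            (p.2 k) ^ (R / 2) *
              Real.exp (-(p.2 k) * ((fun q => p.1 q k) ⬝ᵥ P.mulVec (fun q => p.1 q k)) / 2) *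
              gammaDens αψ βψ (p.2 k)) *
          Set.indicator {Ψ : Matrix (Fin Q) (Fin K) ℝ | Ψᵀ * Ψ = 1} 1 p.1)
      (μ.prod ν) := by
    refine Measurable.aestronglyMeasurable ?_
    have hcoord : ∀ (q : Fin Q) (k : Fin K),
        Measurable fun p : Matrix (Fin Q) (Fin K) ℝ × (Fin K → ℝ) => p.1 q k :=
      fun q k => (measurable_pi_apply k).comp ((measurable_pi_apply q).comp measurable_fst)
    have hH : ∀ k : Fin K,
        Measurable fun p : Matrix (Fin Q) (Fin K) ℝ × (Fin K → ℝ) => p.2 k :=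
      fun k => (measurable_pi_apply k).comp measurable_snd
    have hdot : ∀ k : Fin K, Measurable fun p : Matrix (Fin Q) (Fin K) ℝ × (Fin K → ℝ) =>
        ((fun q => p.1 q k) ⬝ᵥ P.mulVec (fun q => p.1 q k)) := by
      intro k
      simp only [dotProduct, Matrix.mulVec]
      refine Finset.measurable_sum _ fun q _ => ?_
      exact (hcoord q k).mul (Finset.measurable_sum _ fun q' _ =>
        (measurable_const.mul (hcoord q' k)))
    refine Measurable.mul ?_ ?_
    · refine Finset.measurable_prod _ fun k _ => ?_
      refine Measurable.mul (Measurable.mul ?_ ?_) ?_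
      · exact (by fun_prop : Measurable fun p : Matrix (Fin Q) (Fin K) ℝ × (Fin K → ℝ) => (p.2 k) ^ (R / 2))
      · exact (((((hH k).neg).mul (hdot k)).div measurable_const)).exp
      · simp only [gammaDens]
        exact ((measurable_const.mul (by fun_prop : Measurable fun p : Matrix (Fin Q) (Fin K) ℝ × (Fin K → ℝ) => (p.2 k) ^ (αψ - 1))).mul
          ((measurable_const.mul (hH k)).neg.exp))
    · exact (measurable_one.indicator hStief).comp measurable_fst
  -- a.e. positivity of the H coordinates
  have hae : ∀ᵐ p : Matrix (Fin Q) (Fin K) ℝ × (Fin K → ℝ) ∂(μ.prod ν), p.2 ∈ S := by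
    have hν0 : ν Sᶜ = 0 := by
      rw [hν, Measure.restrict_apply (hSmeas.compl)]
      simp
    rw [ae_iff]
    have : {p : Matrix (Fin Q) (Fin K) ℝ × (Fin K → ℝ) | ¬ p.2 ∈ S} =
        (Set.univ : Set (Matrix (Fin Q) (Fin K) ℝ)) ×ˢ Sᶜ := by
      ext p; simp
    rw [this, Measure.prod_prod, hν0, mul_zero]
  -- conclude by domination
  refine hbound.mono' hmeas ?_
  filter_upwards [hae] with p hp
  have hterm_nonneg : ∀ k : Fin K, 0 ≤
      (p.2 k) ^ (R / 2) *
        Real.exp (-(p.2 k) * ((fun q => p.1 q k) ⬝ᵥ P.mulVec (fun q => p.1 q k)) / 2) *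
        gammaDens αψ βψ (p.2 k) := by
    intro k
    have h1 : (0:ℝ) ≤ (p.2 k) ^ (R / 2) := Real.rpow_nonneg (hp k).le _
    have h3 : (0:ℝ) ≤ gammaDens αψ βψ (p.2 k) := by
      simp only [gammaDens]
      have hc : (0:ℝ) ≤ βψ ^ αψ / Real.Gamma αψ :=
        div_nonneg (Real.rpow_nonneg hβ.le _) (Real.Gamma_pos_of_pos hα).le
      exact mul_nonneg (mul_nonneg hc (Real.rpow_nonneg (hp k).le _)) (Real.exp_nonneg _)
    positivity
  have hterm_le : ∀ k : Fin K,
      (p.2 k) ^ (R / 2) *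
        Real.exp (-(p.2 k) * ((fun q => p.1 q k) ⬝ᵥ P.mulVec (fun q => p.1 q k)) / 2) *
        gammaDens αψ βψ (p.2 k) ≤ g (p.2 k) := by
    intro k
    have hgk : g (p.2 k) = (p.2 k) ^ (R / 2) * gammaDens αψ βψ (p.2 k) :=
      Set.indicator_of_mem (hp k) _
    rw [hgk]
    have hdotnn : (0:ℝ) ≤ ((fun q => p.1 q k) ⬝ᵥ P.mulVec (fun q => p.1 q k)) := by
      simpa using hP.re_dotProduct_nonneg (fun q => p.1 q k)
    have hexp : Real.exp (-(p.2 k) * ((fun q => p.1 q k) ⬝ᵥ P.mulVec (fun q => p.1 q k)) / 2)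
        ≤ 1 := by
      rw [Real.exp_le_one_iff]
      have := mul_nonneg (hp k).le hdotnn
      nlinarith
    have h1 : (0:ℝ) ≤ (p.2 k) ^ (R / 2) := Real.rpow_nonneg (hp k).le _
    have h3 : (0:ℝ) ≤ gammaDens αψ βψ (p.2 k) := by
      simp only [gammaDens]
      have hc : (0:ℝ) ≤ βψ ^ αψ / Real.Gamma αψ :=
        div_nonneg (Real.rpow_nonneg hβ.le _) (Real.Gamma_pos_of_pos hα).le
      exact mul_nonneg (mul_nonneg hc (Real.rpow_nonneg (hp k).le _)) (Real.exp_nonneg _)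
    calc (p.2 k) ^ (R / 2) *
        Real.exp (-(p.2 k) * ((fun q => p.1 q k) ⬝ᵥ P.mulVec (fun q => p.1 q k)) / 2) *
        gammaDens αψ βψ (p.2 k)
        ≤ (p.2 k) ^ (R / 2) * 1 * gammaDens αψ βψ (p.2 k) := by
          apply mul_le_mul_of_nonneg_right _ h3
          exact mul_le_mul_of_nonneg_left hexp h1
      _ = (p.2 k) ^ (R / 2) * gammaDens αψ βψ (p.2 k) := by ring
  have hprod_nonneg : (0:ℝ) ≤ ∏ k : Fin K,
      (p.2 k) ^ (R / 2) *
        Real.exp (-(p.2 k) * ((fun q => p.1 q k) ⬝ᵥ P.mulVec (fun q => p.1 q k)) / 2) *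
        gammaDens αψ βψ (p.2 k) :=
    Finset.prod_nonneg fun k _ => hterm_nonneg k
  have hind_nonneg : (0:ℝ) ≤
      Set.indicator {Ψ : Matrix (Fin Q) (Fin K) ℝ | Ψᵀ * Ψ = 1} 1 p.1 :=
    Set.indicator_nonneg (fun _ _ => zero_le_one) _
  have hind_le : Set.indicator {Ψ : Matrix (Fin Q) (Fin K) ℝ | Ψᵀ * Ψ = 1}
      (1 : Matrix (Fin Q) (Fin K) ℝ → ℝ) p.1 ≤ 1 :=
by
    by_cases h : p.1 ∈ {Ψ : Matrix (Fin Q) (Fin K) ℝ | Ψᵀ * Ψ = 1}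
    · simp [Set.indicator_of_mem h]
    · simp [Set.indicator_of_notMem h]
  rw [Real.norm_eq_abs, abs_of_nonneg (mul_nonneg hprod_nonneg hind_nonneg)]
  calc (∏ k : Fin K,
          (p.2 k) ^ (R / 2) *
            Real.exp (-(p.2 k) * ((fun q => p.1 q k) ⬝ᵥ P.mulVec (fun q => p.1 q k)) / 2) *
            gammaDens αψ βψ (p.2 k)) *
        Set.indicator {Ψ : Matrix (Fin Q) (Fin K) ℝ | Ψᵀ * Ψ = 1} 1 p.1
      ≤ (∏ k : Fin K,
          (p.2 k) ^ (R / 2) *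
            Real.exp (-(p.2 k) * ((fun q => p.1 q k) ⬝ᵥ P.mulVec (fun q => p.1 q k)) / 2) *
            gammaDens αψ βψ (p.2 k)) * 1 :=
        mul_le_mul_of_nonneg_left hind_le hprod_nonneg
    _ = ∏ k : Fin K,
          (p.2 k) ^ (R / 2) *
            Real.exp (-(p.2 k) * ((fun q => p.1 q k) ⬝ᵥ P.mulVec (fun q => p.1 q k)) / 2) *
            gammaDens αψ βψ (p.2 k) := mul_one _
    _ ≤ ∏ k : Fin K, g (p.2 k) :=
        Finset.prod_le_prod (fun k _ => hterm_nonneg k) (fun k _ => hterm_le k)
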